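/- There exist real constants A₁, A₂ and strictly positive constants B₁, B₂ such that for all x with 0 < x ≤ c, A₁ + B₁·x^{−d} ≤ F(x) ≤ A₂ + B₂·x^{−d}. -/

import Mathlib

/-!
Self-similarity gives `μ (ρ^(k+1) c, c] = ℓ · μ (ρ^k c, c] + μ (ρ c, c]`, so the mass of the shell
`(ρ^k c, c]` is the geometric sum `μ (ρ c, c] · (1 + ℓ + ⋯ + ℓ^(k-1))`, of order `ℓ^k`.
Every `x ∈ (0, c]` lies in some `(ρ^(k+1) c, ρ^k c]`, on which `x^(-d)` is comparable to
`ℓ^k c^(-d)` because `ρ^(-d) = ℓ`; the tail `F x` lies between the masses of two consecutive shells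
(plus `μ (c, ∞)` for the upper bound).
-/

open MeasureTheory Set Real

lemma Real.pow_rpow_logb {b x : ℝ} (hb : 0 < b) (hb₁ : b ≠ 1) (hx : 0 < x) (k : ℕ) :
    (b ^ k) ^ logb b x = x ^ k := by
  rw [← rpow_natCast, ← rpow_mul hb.le, mul_comm, rpow_mul hb.le, rpow_logb hb hb₁ hx,
    rpow_natCast]

lemma exists_pow_succ_mul_lt_le_pow_mul {ρ c x : ℝ} (hρ₀ : 0 < ρ) (hρ₁ : ρ < 1) (hc : 0 < c)
    (hx : 0 < x) (hxc : x ≤ c) : ∃ k : ℕ, ρ ^ (k + 1) * c < x ∧ x ≤ ρ ^ k * c := by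
  obtain ⟨k, hk₁, hk₂⟩ := exists_nat_pow_near_of_lt_one (div_pos hx hc)
    ((div_le_one hc).2 hxc) hρ₀ hρ₁
  exact ⟨k, (lt_div_iff₀ hc).1 hk₁, (div_le_iff₀ hc).1 hk₂⟩

lemma pow_le_div_rpow_logb_le_pow_succ {ρ ℓ c x : ℝ} {k : ℕ} (hρ₀ : 0 < ρ) (hρ₁ : ρ < 1)
    (hℓ : 1 < ℓ) (hc : 0 < c) (hk₁ : ρ ^ (k + 1) * c < x) (hk₂ : x ≤ ρ ^ k * c) :
    ℓ ^ k ≤ (x / c) ^ logb ρ ℓ ∧ (x / c) ^ logb ρ ℓ ≤ ℓ ^ (k + 1) := by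
  have he : logb ρ ℓ ≤ 0 := (logb_neg_of_base_lt_one hρ₀ hρ₁ hℓ).le
  have hℓ₀ : 0 < ℓ := zero_lt_one.trans hℓ
  constructor
  · rw [← pow_rpow_logb hρ₀ hρ₁.ne hℓ₀]
    have hx : 0 < x := (by positivity : (0 : ℝ) < ρ ^ (k + 1) * c).trans hk₁
    exact rpow_le_rpow_of_nonpos (div_pos hx hc) ((div_le_iff₀ hc).2 hk₂) he
  · rw [← pow_rpow_logb hρ₀ hρ₁.ne hℓ₀]
    exact rpow_le_rpow_of_nonpos (by positivity) ((lt_div_iff₀ hc).2 hk₁).le he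

section SelfSimilar

variable {ρ ℓ c : ℝ} {μ : Measure ℝ}

lemma measure_Ioc_pow_succ_mul (hρ₀ : 0 < ρ) (hρ₁ : ρ ≤ 1) (hc : 0 ≤ c)
    (hscale : ∀ A : Set ℝ, MeasurableSet A → A ⊆ Ioc 0 c →
      μ ((fun a => ρ * a) '' A) = ENNReal.ofReal ℓ * μ A) (k : ℕ) :
    μ (Ioc (ρ ^ (k + 1) * c) c) =
      ENNReal.ofReal ℓ * μ (Ioc (ρ ^ k * c) c) + μ (Ioc (ρ * c) c) := by
  have hρc : ρ ^ (k + 1) * c ≤ ρ * c :=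
    mul_le_mul_of_nonneg_right (pow_le_of_le_one hρ₀.le hρ₁ k.succ_ne_zero) hc
  have hρc' : ρ * c ≤ c := mul_le_of_le_one_left hc hρ₁
  have himage : (fun a => ρ * a) '' Ioc (ρ ^ k * c) c = Ioc (ρ ^ (k + 1) * c) (ρ * c) := by
    rw [image_mul_left_Ioc hρ₀, ← mul_assoc, ← pow_succ']
  rw [← Ioc_union_Ioc_eq_Ioc hρc hρc', measure_union (Ioc_disjoint_Ioc_of_le le_rfl)
    measurableSet_Ioc, ← himage, hscale _ measurableSet_Ioc
    (Ioc_subset_Ioc_left (by positivity))]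

lemma measure_Ioc_pow_mul_eq_geom_sum (hρ₀ : 0 < ρ) (hρ₁ : ρ ≤ 1) (hc : 0 ≤ c)
    (hscale : ∀ A : Set ℝ, MeasurableSet A → A ⊆ Ioc 0 c →
      μ ((fun a => ρ * a) '' A) = ENNReal.ofReal ℓ * μ A) (k : ℕ) :
    μ (Ioc (ρ ^ k * c) c) = (∑ i ∈ Finset.range k, ENNReal.ofReal ℓ ^ i) * μ (Ioc (ρ * c) c) := by
  induction k with
  | zero => simp
  | succ k ih =>
    rw [measure_Ioc_pow_succ_mul hρ₀ hρ₁ hc hscale, ih, geom_sum_succ]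
    ring

lemma toReal_measure_Ioc_pow_mul (hρ₀ : 0 < ρ) (hρ₁ : ρ ≤ 1) (hℓ : 1 < ℓ) (hc : 0 ≤ c)
    (hscale : ∀ A : Set ℝ, MeasurableSet A → A ⊆ Ioc 0 c →
      μ ((fun a => ρ * a) '' A) = ENNReal.ofReal ℓ * μ A) (k : ℕ) :
    (μ (Ioc (ρ ^ k * c) c)).toReal = (ℓ ^ k - 1) / (ℓ - 1) * (μ (Ioc (ρ * c) c)).toReal := by
  have hℓ₀ : 0 ≤ ℓ := zero_le_one.trans hℓ.le
  rw [measure_Ioc_pow_mul_eq_geom_sum hρ₀ hρ₁ hc hscale, ENNReal.toReal_mul,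
    ENNReal.toReal_sum fun i _ => ENNReal.pow_ne_top ENNReal.ofReal_ne_top, ← geom_sum_eq hℓ.ne']
  simp only [ENNReal.toReal_pow, ENNReal.toReal_ofReal hℓ₀]

lemma le_toReal_measure_Ici (hρ₀ : 0 < ρ) (hρ₁ : ρ < 1) (hℓ : 1 < ℓ) (hc : 0 < c)
    (hfin : ∀ x : ℝ, 0 < x → μ (Ici x) < ⊤)
    (hscale : ∀ A : Set ℝ, MeasurableSet A → A ⊆ Ioc 0 c →
      μ ((fun a => ρ * a) '' A) = ENNReal.ofReal ℓ * μ A) {x : ℝ} (hx : 0 < x) (hxc : x ≤ c) :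
    (μ (Ioc (ρ * c) c)).toReal / (ℓ - 1) * ((x / c) ^ logb ρ ℓ / ℓ - 1) ≤ (μ (Ici x)).toReal := by
  have hℓ₁ : 0 < ℓ - 1 := sub_pos.2 hℓ
  obtain ⟨k, hk₁, hk₂⟩ := exists_pow_succ_mul_lt_le_pow_mul hρ₀ hρ₁ hc hx hxc
  have ht : (x / c) ^ logb ρ ℓ / ℓ ≤ ℓ ^ k := by
    rw [div_le_iff₀ (zero_lt_one.trans hℓ), ← pow_succ]
    exact (pow_le_div_rpow_logb_le_pow_succ hρ₀ hρ₁ hℓ hc hk₁ hk₂).2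
  calc (μ (Ioc (ρ * c) c)).toReal / (ℓ - 1) * ((x / c) ^ logb ρ ℓ / ℓ - 1)
      ≤ (μ (Ioc (ρ * c) c)).toReal / (ℓ - 1) * (ℓ ^ k - 1) := by gcongr
    _ = (μ (Ioc (ρ ^ k * c) c)).toReal := by
        rw [toReal_measure_Ioc_pow_mul hρ₀ hρ₁.le hℓ hc.le hscale]; ring
    _ ≤ (μ (Ici x)).toReal :=
        ENNReal.toReal_mono (hfin x hx).ne (measure_mono fun y hy => hk₂.trans hy.1.le)

lemma toReal_measure_Ici_le (hρ₀ : 0 < ρ) (hρ₁ : ρ < 1) (hℓ : 1 < ℓ) (hc : 0 < c)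
    (hfin : ∀ x : ℝ, 0 < x → μ (Ici x) < ⊤)
    (hscale : ∀ A : Set ℝ, MeasurableSet A → A ⊆ Ioc 0 c →
      μ ((fun a => ρ * a) '' A) = ENNReal.ofReal ℓ * μ A) {x : ℝ} (hx : 0 < x) (hxc : x ≤ c) :
    (μ (Ici x)).toReal ≤
      (μ (Ioc (ρ * c) c)).toReal * ℓ / (ℓ - 1) * (x / c) ^ logb ρ ℓ + (μ (Ioi c)).toReal := by
  have hℓ₁ : 0 < ℓ - 1 := sub_pos.2 hℓ
  obtain ⟨k, hk₁, hk₂⟩ := exists_pow_succ_mul_lt_le_pow_mul hρ₀ hρ₁ hc hx hxc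
  set a := ρ ^ (k + 1) * c
  have ha : 0 < a := by positivity
  have hac : a ≤ c := mul_le_of_le_one_left hc.le (pow_le_one₀ hρ₀.le hρ₁.le)
  have hfin_Ioi : ∀ b, 0 < b → μ (Ioi b) ≠ ⊤ := fun b hb =>
    ne_top_of_le_ne_top (hfin b hb).ne (measure_mono Ioi_subset_Ici_self)
  have hshell : (μ (Ioi a)).toReal = (μ (Ioc a c)).toReal + (μ (Ioi c)).toReal := by
    have hIoc : μ (Ioc a c) ≠ ⊤ :=
      ne_top_of_le_ne_top (hfin_Ioi a ha) (measure_mono Ioc_subset_Ioi_self)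
    rw [← Ioc_union_Ioi_eq_Ioi hac, measure_union (Ioc_disjoint_Ioi le_rfl) measurableSet_Ioi,
      ENNReal.toReal_add hIoc (hfin_Ioi c hc)]
  have ht : ℓ ^ k ≤ (x / c) ^ logb ρ ℓ :=
    (pow_le_div_rpow_logb_le_pow_succ hρ₀ hρ₁ hℓ hc hk₁ hk₂).1
  calc (μ (Ici x)).toReal
      ≤ (μ (Ioi a)).toReal :=
        ENNReal.toReal_mono (hfin_Ioi a ha) (measure_mono fun y hy => hk₁.trans_le hy)
    _ = (ℓ ^ (k + 1) - 1) / (ℓ - 1) * (μ (Ioc (ρ * c) c)).toReal + (μ (Ioi c)).toReal := by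
        rw [hshell, toReal_measure_Ioc_pow_mul hρ₀ hρ₁.le hℓ hc.le hscale]
    _ ≤ ℓ ^ (k + 1) / (ℓ - 1) * (μ (Ioc (ρ * c) c)).toReal + (μ (Ioi c)).toReal := by
        gcongr; linarith
    _ = (μ (Ioc (ρ * c) c)).toReal * ℓ / (ℓ - 1) * ℓ ^ k + (μ (Ioi c)).toReal := by ring
    _ ≤ _ := by gcongr

end SelfSimilar

theorem ph_self_similar_F_bounds
    (ρ ℓ c : ℝ) (hρ : ρ ∈ Set.Ioo (0 : ℝ) 1) (hℓ : 1 < ℓ) (hc : 0 < c)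
    (μ : Measure ℝ)
    (hfin : ∀ x : ℝ, 0 < x → μ (Set.Ici x) < ⊤)
    (hpos : 0 < μ (Set.Ioc (ρ * c) c))
    (hscale : ∀ A : Set ℝ, MeasurableSet A → A ⊆ Set.Ioc 0 c →
      μ ((fun a => ρ * a) '' A) = ENNReal.ofReal ℓ * μ A)
    (F : ℝ → ℝ) (hF : ∀ x : ℝ, F x = (μ (Set.Ici x)).toReal)
    (d : ℝ) (hd : d = Real.log ℓ / Real.log (1 / ρ)) :
    ∃ A₁ A₂ B₁ B₂ : ℝ, 0 < B₁ ∧ 0 < B₂ ∧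
      ∀ x : ℝ, 0 < x → x ≤ c →
        A₁ + B₁ * x ^ (-d) ≤ F x ∧ F x ≤ A₂ + B₂ * x ^ (-d) := by
  obtain ⟨hρ₀, hρ₁⟩ := hρ
  have hℓ₁ : 0 < ℓ - 1 := sub_pos.2 hℓ
  have hd' : -d = logb ρ ℓ := by rw [hd, one_div, log_inv, div_neg, neg_neg, logb]
  set M := (μ (Ioc (ρ * c) c)).toReal
  have hM : 0 < M := ENNReal.toReal_pos hpos.ne'
    (ne_top_of_le_ne_top (hfin _ (by positivity)).ne (measure_mono fun y hy => hy.1.le))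
  refine ⟨-(M / (ℓ - 1)), (μ (Ioi c)).toReal, M / (ℓ - 1) / ℓ * c ^ d, M * ℓ / (ℓ - 1) * c ^ d,
    by positivity, by positivity, fun x hx hxc => ?_⟩
  have hscaled : (x / c) ^ logb ρ ℓ = c ^ d * x ^ (-d) := by
    rw [← hd', div_rpow hx.le hc.le, rpow_neg hc.le, div_inv_eq_mul, mul_comm]
  rw [hF]
  constructor
  · calc -(M / (ℓ - 1)) + M / (ℓ - 1) / ℓ * c ^ d * x ^ (-d)
        = M / (ℓ - 1) * ((x / c) ^ logb ρ ℓ / ℓ - 1) := by rw [hscaled]; ring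
      _ ≤ _ := le_toReal_measure_Ici hρ₀ hρ₁ hℓ hc hfin hscale hx hxc
  · calc (μ (Ici x)).toReal ≤ M * ℓ / (ℓ - 1) * (x / c) ^ logb ρ ℓ + (μ (Ioi c)).toReal :=
          toReal_measure_Ici_le hρ₀ hρ₁ hℓ hc hfin hscale hx hxc
      _ = _ := by rw [hscaled]; ring
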